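/- arXiv:1610.08295 — 3 statements merged into one kernel-verified Lean document; each statement's English description precedes it below -/
import Mathlib

section
/- Fix ε ∈ (0,1) and λ > 0 and an integer N ≥ 2 with ε = 1/N. The equation J'(√(|log ε|/ε)·(λ-w)/(N-1)) = J'(√(|log ε|/ε)·w), for w ∈ ℝ, is satisfied by w = ελ and by w_{1,2} = λ/2 ± √(λ²/4 - (1-ε)/|log ε|), provided λ² /4 ≥ (1-ε)/|log ε|. -/
/-!
`J'` is invariant under `z ↦ 1 / z`. With `c = √(|log ε| / ε)` and `N - 1 = (1 - ε) / ε`, the root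
`w = ελ` makes the two arguments equal, while the two roots of `w (λ - w) = (1 - ε) / |log ε|`
make their product `c² w (λ - w) / (N - 1)` equal to `1`.
-/

open Real

noncomputable def J' (z : ℝ) : ℝ := 2 * z / (1 + z ^ 2)

lemma J'_eq_of_mul_eq_one {a b : ℝ} (h : a * b = 1) : J' a = J' b := by
  unfold J'
  rw [div_eq_div_iff (by positivity) (by positivity)]
  linear_combination (2 * b - 2 * a) * h

lemma mul_sub_eq_of_eq_half_add_sqrt_or {m p w : ℝ} (hp : p ≤ m ^ 2 / 4)
    (hw : w = m / 2 + √(m ^ 2 / 4 - p) ∨ w = m / 2 - √(m ^ 2 / 4 - p)) :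
    w * (m - w) = p := by
  have hs := sq_sqrt (sub_nonneg.2 hp)
  rcases hw with rfl | rfl <;> linear_combination -hs

lemma natCast_sub_one_eq_of_eq_one_div {ε : ℝ} {N : ℕ} (hε : ε ≠ 0) (hεN : ε = 1 / N) :
    (N : ℝ) - 1 = (1 - ε) / ε := by
  have hN : (N : ℝ) ≠ 0 := by rintro h; simp_all
  rw [hεN]
  field_simp

theorem stationary_solutions_general (ε lam : ℝ) (N : ℕ) (hε : ε ∈ Set.Ioo (0 : ℝ) 1)
    (hεN : ε = 1 / (N : ℝ))
    (hdisc : lam ^ 2 / 4 ≥ (1 - ε) / (-Real.log ε)) :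
    (J' (Real.sqrt ((-Real.log ε) / ε) * (lam - ε * lam) / ((N : ℝ) - 1)) =
      J' (Real.sqrt ((-Real.log ε) / ε) * (ε * lam))) ∧
    (∀ w : ℝ,
      (w = lam / 2 + Real.sqrt (lam ^ 2 / 4 - (1 - ε) / (-Real.log ε)) ∨
       w = lam / 2 - Real.sqrt (lam ^ 2 / 4 - (1 - ε) / (-Real.log ε))) →
      J' (Real.sqrt ((-Real.log ε) / ε) * (lam - w) / ((N : ℝ) - 1)) =
        J' (Real.sqrt ((-Real.log ε) / ε) * w)) := by
  obtain ⟨hε0, hε1⟩ := hε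
  have hlog : log ε < 0 := log_neg hε0 hε1
  have h1ε : 1 - ε ≠ 0 := by linarith
  rw [natCast_sub_one_eq_of_eq_one_div hε0.ne' hεN]
  set c := √(-log ε / ε)
  have hc : c ^ 2 = -log ε / ε := sq_sqrt (div_nonneg (by linarith) hε0.le)
  refine ⟨congrArg J' ?_, fun w hw => J'_eq_of_mul_eq_one ?_⟩
  · field_simp
  · have hroot := mul_sub_eq_of_eq_half_add_sqrt_or hdisc hw
    calc c * (lam - w) / ((1 - ε) / ε) * (c * w)
        = c ^ 2 * (w * (lam - w)) * ε / (1 - ε) := by field_simp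
      _ = 1 := by
        rw [hc, hroot]
        field_simp [hlog.ne]

theorem stationary_solutions (ε lam : ℝ) (N : ℕ) (hε : ε ∈ Set.Ioo (0 : ℝ) 1)
    (hlam : 0 < lam) (hN : 2 ≤ N) (hεN : ε = 1 / (N : ℝ))
    (hdisc : lam ^ 2 / 4 ≥ (1 - ε) / (-Real.log ε)) :
    (J' (Real.sqrt ((-Real.log ε) / ε) * (lam - ε * lam) / ((N : ℝ) - 1)) =
      J' (Real.sqrt ((-Real.log ε) / ε) * (ε * lam))) ∧
    (∀ w : ℝ,
      (w = lam / 2 + Real.sqrt (lam ^ 2 / 4 - (1 - ε) / (-Real.log ε)) ∨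
       w = lam / 2 - Real.sqrt (lam ^ 2 / 4 - (1 - ε) / (-Real.log ε))) →
      J' (Real.sqrt ((-Real.log ε) / ε) * (lam - w) / ((N : ℝ) - 1)) =
        J' (Real.sqrt ((-Real.log ε) / ε) * w)) :=
  stationary_solutions_general ε lam N hε hεN hdisc
end

section
/- Let p : (0,1) → (0,∞) satisfy lim_{ε→0⁺} p(ε) = 0 and lim_{ε→0⁺}(p(ε)|log ε| - log|log ε|) = +∞, and set c_ε = ε^{p(ε)}. Then lim_{ε→0⁺} (1/|log ε|)·log(1 + (|log ε|/ε)·c_ε²) = 1. -/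
/-!
Write `L = -log ε`. Then `(L / ε) · (ε ^ p)² = exp (log L + (1 - 2p) L)`, and the exponent divided
by `L` tends to `1` because `log L / L → 0` and `p → 0`. Finally `log (1 + exp g) = g + o(1)` as
`g → ∞`, so dividing by `L → ∞` does not change the limit.
-/

open Real Filter Set Topology

theorem tendsto_log_one_add_exp_div {α : Type*} {l : Filter α} {g L : α → ℝ}
    (hL : Tendsto L l atTop) (hg : Tendsto (fun x => g x / L x) l (𝓝 1)) :
    Tendsto (fun x => log (1 + exp (g x)) / L x) l (𝓝 1) := by
  have hg_top : Tendsto g l atTop := by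
    refine (hg.pos_mul_atTop one_pos hL).congr' ?_
    filter_upwards [hL.eventually_gt_atTop 0] with x hx
    exact div_mul_cancel₀ _ hx.ne'
  have hcorr : Tendsto (fun x => log (1 + exp (g x)) - g x) l (𝓝 0) := by
    have hexp : Tendsto (fun x => exp (-g x)) l (𝓝 0) :=
      tendsto_exp_neg_atTop_nhds_zero.comp hg_top
    have hlog1 := (hexp.const_add 1).log (by norm_num)
    rw [add_zero, log_one] at hlog1
    refine hlog1.congr fun x => ?_
    have hfactor : 1 + exp (g x) = (1 + exp (-g x)) * exp (g x) := by
      rw [add_mul, one_mul, ← exp_add, neg_add_cancel, exp_zero, add_comm]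
    rw [hfactor, log_mul (by positivity) (exp_pos _).ne', log_exp, add_sub_cancel_right]
  have hsum := hg.add (hcorr.div_atTop hL)
  rw [add_zero] at hsum
  refine hsum.congr' ?_
  filter_upwards [hL.eventually_gt_atTop 0] with x hx
  rw [← add_div, add_sub_cancel]

theorem neg_log_div_mul_rpow_sq_eq_exp {ε : ℝ} (hε0 : 0 < ε) (hε1 : ε < 1) (q : ℝ) :
    -log ε / ε * (ε ^ q) ^ 2 = exp (log (-log ε) + (1 - 2 * q) * -log ε) := by
  have hL : 0 < -log ε := neg_pos.mpr (log_neg hε0 hε1)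
  rw [exp_add, exp_log hL, rpow_def_of_pos hε0, ← exp_nat_mul,
    show (1 - 2 * q) * -log ε = 2 * (log ε * q) - log ε by ring, exp_sub, exp_log hε0]
  push_cast
  ring

theorem morini_negri_part2_general (p : ℝ → ℝ)
    (hp0 : Tendsto p (nhdsWithin 0 (Set.Ioo 0 1)) (nhds 0)) :
    Tendsto (fun ε : ℝ =>
        (1 / (-Real.log ε)) * Real.log (1 + ((-Real.log ε) / ε) * (ε ^ (p ε)) ^ 2))
      (nhdsWithin 0 (Set.Ioo 0 1)) (nhds 1) := by
  have hL : Tendsto (fun ε : ℝ => -log ε) (𝓝[Ioo 0 1] 0) atTop :=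
    tendsto_neg_atBot_atTop.comp
      (tendsto_log_nhdsGT_zero.mono_left (nhdsWithin_mono _ fun _ hx => hx.1))
  have hexponent : Tendsto (fun ε : ℝ => (log (-log ε) + (1 - 2 * p ε) * -log ε) / -log ε)
      (𝓝[Ioo 0 1] 0) (𝓝 1) := by
    have hlog : Tendsto (fun ε : ℝ => log (-log ε) / -log ε) (𝓝[Ioo 0 1] 0) (𝓝 0) :=
      isLittleO_log_id_atTop.tendsto_div_nhds_zero.comp hL
    have hsum := hlog.add ((hp0.const_mul 2).const_sub 1)
    rw [mul_zero, sub_zero, zero_add] at hsum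
    refine hsum.congr' ?_
    filter_upwards [hL.eventually_gt_atTop 0] with ε hε
    rw [add_div, mul_div_cancel_right₀ _ hε.ne']
  refine (tendsto_log_one_add_exp_div hL hexponent).congr' ?_
  filter_upwards [self_mem_nhdsWithin] with ε hε
  rw [neg_log_div_mul_rpow_sq_eq_exp hε.1 hε.2, one_div_mul_eq_div]

theorem morini_negri_part2 (p : ℝ → ℝ)
    (hp_pos : ∀ ε ∈ Set.Ioo (0 : ℝ) 1, 0 < p ε)
    (hp0 : Tendsto p (nhdsWithin 0 (Set.Ioo 0 1)) (nhds 0))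
    (hp1 : Tendsto (fun ε : ℝ => p ε * (-Real.log ε) - Real.log (-Real.log ε))
      (nhdsWithin 0 (Set.Ioo 0 1)) atTop) :
    Tendsto (fun ε : ℝ =>
        (1 / (-Real.log ε)) * Real.log (1 + ((-Real.log ε) / ε) * (ε ^ (p ε)) ^ 2))
      (nhdsWithin 0 (Set.Ioo 0 1)) (nhds 1) :=
  morini_negri_part2_general p hp0
end

section
/- Let h : ℝ → ℝ be Lipschitz with Lipschitz constant L < 1, let C ∈ ℝ, and let (a_k) be a real sequence satisfying a_{k+1} - a_k + h(a_{k+1}) ≤ h(C) for all k ≥ 0. If a_0 ≤ C then a_k ≤ C for all k ≥ 0. -/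
open Real

theorem LipschitzWith.strictMono_add_self {h : ℝ → ℝ} {L : NNReal} (hL : (L : ℝ) < 1)
    (hLip : LipschitzWith L h) : StrictMono fun x ↦ x + h x := by
  intro x y hxy
  have hdist : |h y - h x| ≤ L * (y - x) := by
    simpa [Real.dist_eq, abs_of_pos (sub_pos.mpr hxy)] using hLip.dist_le_mul y x
  have hdiff : h x - h y < y - x := calc
    h x - h y ≤ |h y - h x| := by rw [abs_sub_comm]; exact le_abs_self _
    _ ≤ L * (y - x) := hdist
    _ < y - x := mul_lt_of_lt_one_left (sub_pos.mpr hxy) hL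
  simp only
  linarith

theorem comparison_lemma (h : ℝ → ℝ) (L : NNReal) (hL : (L : ℝ) < 1)
    (hLip : LipschitzWith L h) (C : ℝ) (a : ℕ → ℝ)
    (ha : ∀ k : ℕ, a (k + 1) - a k + h (a (k + 1)) ≤ h C)
    (h0 : a 0 ≤ C) : ∀ k : ℕ, a k ≤ C := by
  intro k
  induction k with
  | zero => exact h0
  | succ n ih =>
    -- `a (n + 1) + h (a (n + 1)) ≤ a n + h C ≤ C + h C`, and `x ↦ x + h x` is strictly increasing.
    refine (hLip.strictMono_add_self hL).le_iff_le.mp ?_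
    linarith [ha n]
end
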